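/- Let T : S → S be a contraction with constant δ ∈ (0,1) and fixed point x⋆ on a nonempty closed convex subset S of a Banach space. Let {u_n} be the CR iteration (u_{n+1} = (1-α_n¹)v_n + α_n¹Tv_n, v_n = (1-α_n²)Tu_n + α_n²Ty_n, y_n = (1-α_n³)u_n + α_n³Tu_n) and {p_n} the Karahan–Özdemir iteration, with common scalar sequences α_n^i ∈ [0,1] satisfying ∑ α_k¹ = ∞. Then ‖p_{n+1} - u_{n+1}‖ ≤ [1 - α_n¹(1-δ)] ‖p_n - u_n‖ + (1-α_n¹)(2 + α_n² δ α_n³)(1+δ) ‖p_n - x⋆‖ for all n. -/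

import Mathlib

/-!
Both schemes are built from convex combinations of points and their images under `T`, and the
distance between two convex combinations with equal weights is at most the same combination of
the distances, which `T` shrinks by `δ`. The CR step is a Mann step applied after an S-iteration
step `v`, while the Karahan–Özdemir step replaces the leading point `v` of that Mann step by `T p`.
The discrepancy `‖T p - v‖` exceeds `δ ‖p - u‖` only by a multiple of `‖p - x⋆‖`, since
`‖p - T p‖ ≤ (1 + δ) ‖p - x⋆‖`.
-/

open Filter Set

section

variable {B : Type*} [NormedAddCommGroup B]

lemma norm_sub_apply_le_of_isFixedPt {S : Set B} {T : B → B} {δ : ℝ}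
    (hT : ∀ x ∈ S, ∀ y ∈ S, ‖T x - T y‖ ≤ δ * ‖x - y‖) {xs x : B} (hxs : xs ∈ S) (hfix : T xs = xs) (hx : x ∈ S) :
    ‖x - T x‖ ≤ (1 + δ) * ‖x - xs‖ := by
  calc ‖x - T x‖ = ‖(x - xs) + (T xs - T x)‖ := by rw [hfix]; abel_nf
    _ ≤ ‖x - xs‖ + δ * ‖xs - x‖ := norm_add_le_of_le le_rfl (hT _ hxs _ hx)
    _ = (1 + δ) * ‖x - xs‖ := by rw [norm_sub_rev xs]; ring

variable [NormedSpace ℝ B]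

lemma norm_combo_sub_combo_le {a : ℝ} (ha : a ∈ Icc (0 : ℝ) 1) (x z x' z' : B) :
    ‖((1 - a) • x + a • z) - ((1 - a) • x' + a • z')‖ ≤ (1 - a) * ‖x - x'‖ + a * ‖z - z'‖ := by
  have hsplit : ((1 - a) • x + a • z) - ((1 - a) • x' + a • z') =
      (1 - a) • (x - x') + a • (z - z') := by module
  rw [hsplit]
  refine (norm_add_le _ _).trans_eq ?_
  rw [norm_smul, norm_smul, Real.norm_of_nonneg (sub_nonneg.2 ha.2), Real.norm_of_nonneg ha.1]

lemma Convex.combo_mem {S : Set B} (hS : Convex ℝ S) {a : ℝ} (ha : a ∈ Icc (0 : ℝ) 1)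
    {x z : B} (hx : x ∈ S) (hz : z ∈ S) : (1 - a) • x + a • z ∈ S :=
  hS hx hz (sub_nonneg.2 ha.2) ha.1 (sub_add_cancel 1 a)

def mannStep (T : B → B) (a : ℝ) (x : B) : B := (1 - a) • x + a • T x

/-- One step of the S-iteration of Agarwal, O'Regan and Sahu. -/
def sIterationStep (T : B → B) (a b : ℝ) (x : B) : B :=
  (1 - a) • T x + a • T (mannStep T b x)

def karahanOzdemirStep (T : B → B) (a₁ a₂ a₃ : ℝ) (x : B) : B :=
  (1 - a₁) • T x + a₁ • T (sIterationStep T a₂ a₃ x)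

def crStep (T : B → B) (a₁ a₂ a₃ : ℝ) (x : B) : B :=
  mannStep T a₁ (sIterationStep T a₂ a₃ x)

variable {S : Set B} {T : B → B} {δ : ℝ}

lemma mapsTo_mannStep (hS : Convex ℝ S) (hTS : MapsTo T S S) {a : ℝ} (ha : a ∈ Icc (0 : ℝ) 1) :
    MapsTo (mannStep T a) S S :=
  fun _ hx => hS.combo_mem ha hx (hTS hx)

lemma mapsTo_sIterationStep (hS : Convex ℝ S) (hTS : MapsTo T S S) {a b : ℝ}
    (ha : a ∈ Icc (0 : ℝ) 1) (hb : b ∈ Icc (0 : ℝ) 1) : MapsTo (sIterationStep T a b) S S :=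
  fun _ hx => hS.combo_mem ha (hTS hx) (hTS (mapsTo_mannStep hS hTS hb hx))

lemma mapsTo_karahanOzdemirStep (hS : Convex ℝ S) (hTS : MapsTo T S S) {a₁ a₂ a₃ : ℝ}
    (ha₁ : a₁ ∈ Icc (0 : ℝ) 1) (ha₂ : a₂ ∈ Icc (0 : ℝ) 1) (ha₃ : a₃ ∈ Icc (0 : ℝ) 1) :
    MapsTo (karahanOzdemirStep T a₁ a₂ a₃) S S :=
  fun _ hx => hS.combo_mem ha₁ (hTS hx) (hTS (mapsTo_sIterationStep hS hTS ha₂ ha₃ hx))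

lemma mapsTo_crStep (hS : Convex ℝ S) (hTS : MapsTo T S S) {a₁ a₂ a₃ : ℝ}
    (ha₁ : a₁ ∈ Icc (0 : ℝ) 1) (ha₂ : a₂ ∈ Icc (0 : ℝ) 1) (ha₃ : a₃ ∈ Icc (0 : ℝ) 1) :
    MapsTo (crStep T a₁ a₂ a₃) S S :=
  (mapsTo_mannStep hS hTS ha₁).comp (mapsTo_sIterationStep hS hTS ha₂ ha₃)

lemma norm_mannStep_sub_mannStep_le (hT : ∀ x ∈ S, ∀ y ∈ S, ‖T x - T y‖ ≤ δ * ‖x - y‖)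
    (hδ : δ ≤ 1) {a : ℝ} (ha : a ∈ Icc (0 : ℝ) 1) {x y : B} (hx : x ∈ S) (hy : y ∈ S) :
    ‖mannStep T a x - mannStep T a y‖ ≤ ‖x - y‖ := by
  calc ‖mannStep T a x - mannStep T a y‖ ≤ (1 - a) * ‖x - y‖ + a * ‖T x - T y‖ :=
        norm_combo_sub_combo_le ha _ _ _ _
    _ ≤ (1 - a) * ‖x - y‖ + a * (1 * ‖x - y‖) := by
        gcongr
        · exact ha.1
        · exact (hT _ hx _ hy).trans (by gcongr)
    _ = ‖x - y‖ := by ring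

lemma norm_sIterationStep_sub_sIterationStep_le
    (hT : ∀ x ∈ S, ∀ y ∈ S, ‖T x - T y‖ ≤ δ * ‖x - y‖) (hS : Convex ℝ S) (hTS : MapsTo T S S)
    (hδ : δ ∈ Icc (0 : ℝ) 1) {a b : ℝ} (ha : a ∈ Icc (0 : ℝ) 1) (hb : b ∈ Icc (0 : ℝ) 1)
    {x y : B} (hx : x ∈ S) (hy : y ∈ S) :
    ‖sIterationStep T a b x - sIterationStep T a b y‖ ≤ δ * ‖x - y‖ := by
  have hmann : ‖T (mannStep T b x) - T (mannStep T b y)‖ ≤ δ * ‖x - y‖ :=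
    (hT _ (mapsTo_mannStep hS hTS hb hx) _ (mapsTo_mannStep hS hTS hb hy)).trans
      (mul_le_mul_of_nonneg_left (norm_mannStep_sub_mannStep_le hT hδ.2 hb hx hy) hδ.1)
  calc ‖sIterationStep T a b x - sIterationStep T a b y‖
        ≤ (1 - a) * ‖T x - T y‖ + a * ‖T (mannStep T b x) - T (mannStep T b y)‖ :=
        norm_combo_sub_combo_le ha _ _ _ _
    _ ≤ (1 - a) * (δ * ‖x - y‖) + a * (δ * ‖x - y‖) := by
        gcongr
        · exact sub_nonneg.2 ha.2
        · exact hT _ hx _ hy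
        · exact ha.1
    _ = δ * ‖x - y‖ := by ring

lemma norm_sub_mannStep_le (hT : ∀ x ∈ S, ∀ y ∈ S, ‖T x - T y‖ ≤ δ * ‖x - y‖)
    (hδ : δ ∈ Icc (0 : ℝ) 1) {xs : B} (hxs : xs ∈ S) (hfix : T xs = xs) {b : ℝ}
    (hb : b ∈ Icc (0 : ℝ) 1) {x y : B} (hx : x ∈ S) (hy : y ∈ S) :
    ‖x - mannStep T b y‖ ≤ ‖x - y‖ + b * ((1 + δ) * ‖x - xs‖) := by
  have hxTy : ‖x - T y‖ ≤ (1 + δ) * ‖x - xs‖ + δ * ‖x - y‖ :=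
    calc ‖x - T y‖ = ‖(x - T x) + (T x - T y)‖ := by abel_nf
      _ ≤ _ := norm_add_le_of_le (norm_sub_apply_le_of_isFixedPt hT hxs hfix hx) (hT _ hx _ hy)
  calc ‖x - mannStep T b y‖ = ‖((1 - b) • x + b • x) - mannStep T b y‖ := by
        rw [← add_smul, sub_add_cancel, one_smul]
    _ ≤ (1 - b) * ‖x - y‖ + b * ‖x - T y‖ := norm_combo_sub_combo_le hb _ _ _ _
    _ ≤ (1 - b) * ‖x - y‖ + b * ((1 + δ) * ‖x - xs‖ + 1 * ‖x - y‖) := by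
        gcongr
        · exact hb.1
        · exact hxTy.trans (by gcongr; exact hδ.2)
    _ = ‖x - y‖ + b * ((1 + δ) * ‖x - xs‖) := by ring

lemma norm_apply_sub_sIterationStep_le (hT : ∀ x ∈ S, ∀ y ∈ S, ‖T x - T y‖ ≤ δ * ‖x - y‖)
    (hS : Convex ℝ S) (hTS : MapsTo T S S) (hδ : δ ∈ Icc (0 : ℝ) 1) {xs : B} (hxs : xs ∈ S)
    (hfix : T xs = xs) {a b : ℝ} (ha : a ∈ Icc (0 : ℝ) 1) (hb : b ∈ Icc (0 : ℝ) 1)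
    {x y : B} (hx : x ∈ S) (hy : y ∈ S) :
    ‖T x - sIterationStep T a b y‖ ≤ δ * ‖x - y‖ + a * δ * b * (1 + δ) * ‖x - xs‖ := by
  have hmann : ‖T x - T (mannStep T b y)‖ ≤ δ * (‖x - y‖ + b * ((1 + δ) * ‖x - xs‖)) :=
    (hT _ hx _ (mapsTo_mannStep hS hTS hb hy)).trans
      (mul_le_mul_of_nonneg_left (norm_sub_mannStep_le hT hδ hxs hfix hb hx hy) hδ.1)
  calc ‖T x - sIterationStep T a b y‖ = ‖((1 - a) • T x + a • T x) - sIterationStep T a b y‖ := by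
        rw [← add_smul, sub_add_cancel, one_smul]
    _ ≤ (1 - a) * ‖T x - T y‖ + a * ‖T x - T (mannStep T b y)‖ :=
        norm_combo_sub_combo_le ha _ _ _ _
    _ ≤ (1 - a) * (δ * ‖x - y‖) + a * (δ * (‖x - y‖ + b * ((1 + δ) * ‖x - xs‖))) := by
        gcongr
        · exact sub_nonneg.2 ha.2
        · exact hT _ hx _ hy
        · exact ha.1
    _ = δ * ‖x - y‖ + a * δ * b * (1 + δ) * ‖x - xs‖ := by ring

lemma norm_karahanOzdemirStep_sub_crStep_le
    (hT : ∀ x ∈ S, ∀ y ∈ S, ‖T x - T y‖ ≤ δ * ‖x - y‖) (hS : Convex ℝ S) (hTS : MapsTo T S S)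
    (hδ : δ ∈ Icc (0 : ℝ) 1) {xs : B} (hxs : xs ∈ S) (hfix : T xs = xs) {a₁ a₂ a₃ : ℝ}
    (ha₁ : a₁ ∈ Icc (0 : ℝ) 1) (ha₂ : a₂ ∈ Icc (0 : ℝ) 1) (ha₃ : a₃ ∈ Icc (0 : ℝ) 1)
    {x y : B} (hx : x ∈ S) (hy : y ∈ S) :
    ‖karahanOzdemirStep T a₁ a₂ a₃ x - crStep T a₁ a₂ a₃ y‖ ≤
      δ * (1 - a₁ * (1 - δ)) * ‖x - y‖ + (1 - a₁) * a₂ * δ * a₃ * (1 + δ) * ‖x - xs‖ := by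
  have hS' := mapsTo_sIterationStep hS hTS ha₂ ha₃
  have hq : ‖T (sIterationStep T a₂ a₃ x) - T (sIterationStep T a₂ a₃ y)‖ ≤ δ * (δ * ‖x - y‖) :=
    (hT _ (hS' hx) _ (hS' hy)).trans (mul_le_mul_of_nonneg_left
      (norm_sIterationStep_sub_sIterationStep_le hT hS hTS hδ ha₂ ha₃ hx hy) hδ.1)
  calc ‖karahanOzdemirStep T a₁ a₂ a₃ x - crStep T a₁ a₂ a₃ y‖
        ≤ (1 - a₁) * ‖T x - sIterationStep T a₂ a₃ y‖ +
          a₁ * ‖T (sIterationStep T a₂ a₃ x) - T (sIterationStep T a₂ a₃ y)‖ :=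
        norm_combo_sub_combo_le ha₁ _ _ _ _
    _ ≤ (1 - a₁) * (δ * ‖x - y‖ + a₂ * δ * a₃ * (1 + δ) * ‖x - xs‖) +
          a₁ * (δ * (δ * ‖x - y‖)) := by
        gcongr
        · exact sub_nonneg.2 ha₁.2
        · exact norm_apply_sub_sIterationStep_le hT hS hTS hδ hxs hfix ha₂ ha₃ hx hy
        · exact ha₁.1
    _ = _ := by ring

end

theorem stmt_6_general {B : Type*} [NormedAddCommGroup B] [NormedSpace ℝ B]
    (S : Set B) (hSco : Convex ℝ S)
    (T : B → B) (hTS : ∀ x ∈ S, T x ∈ S)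
    (δ : ℝ) (hδ : δ ∈ Set.Ioo (0 : ℝ) 1)
    (hT : ∀ x ∈ S, ∀ y ∈ S, ‖T x - T y‖ ≤ δ * ‖x - y‖)
    (xs : B) (hxs : xs ∈ S) (hfix : T xs = xs)
    (α1 α2 α3 : ℕ → ℝ)
    (hα1 : ∀ n, α1 n ∈ Set.Icc (0 : ℝ) 1) (hα2 : ∀ n, α2 n ∈ Set.Icc (0 : ℝ) 1)
    (hα3 : ∀ n, α3 n ∈ Set.Icc (0 : ℝ) 1)
    (p q r : ℕ → B) (hp0 : p 0 ∈ S)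
    (hp : ∀ n, p (n + 1) = (1 - α1 n) • T (p n) + α1 n • T (q n))
    (hq : ∀ n, q n = (1 - α2 n) • T (p n) + α2 n • T (r n))
    (hr : ∀ n, r n = (1 - α3 n) • p n + α3 n • T (p n))
    (u v y : ℕ → B) (hu0 : u 0 ∈ S)
    (hu : ∀ n, u (n + 1) = (1 - α1 n) • v n + α1 n • T (v n))
    (hv : ∀ n, v n = (1 - α2 n) • T (u n) + α2 n • T (y n))
    (hy : ∀ n, y n = (1 - α3 n) • u n + α3 n • T (u n)) :
    ∀ n, ‖p (n + 1) - u (n + 1)‖ ≤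
      (1 - α1 n * (1 - δ)) * ‖p n - u n‖ +
        (1 - α1 n) * (2 + α2 n * δ * α3 n) * (1 + δ) * ‖p n - xs‖ := by
  have hδ' : δ ∈ Icc (0 : ℝ) 1 := Ioo_subset_Icc_self hδ
  have hp_step n : p (n + 1) = karahanOzdemirStep T (α1 n) (α2 n) (α3 n) (p n) := by
    rw [hp, hq, hr]; rfl
  have hu_step n : u (n + 1) = crStep T (α1 n) (α2 n) (α3 n) (u n) := by
    rw [hu, hv, hy]; rfl
  have hpS n : p n ∈ S := Nat.rec hp0 (fun n ih => hp_step n ▸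
    mapsTo_karahanOzdemirStep hSco hTS (hα1 n) (hα2 n) (hα3 n) ih) n
  have huS n : u n ∈ S := Nat.rec hu0 (fun n ih => hu_step n ▸
    mapsTo_crStep hSco hTS (hα1 n) (hα2 n) (hα3 n) ih) n
  intro n
  rw [hp_step, hu_step]
  refine (norm_karahanOzdemirStep_sub_crStep_le hT hSco hTS hδ' hxs hfix (hα1 n) (hα2 n) (hα3 n)
    (hpS n) (huS n)).trans ?_
  obtain ⟨ha₁0, ha₁1⟩ := hα1 n
  have hcoef : 0 ≤ 1 - α1 n * (1 - δ) := by
    linarith [mul_le_of_le_one_left (sub_nonneg.2 hδ.2.le) ha₁1, hδ.1]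
  gcongr ?_ * _ + ?_ * _
  · exact mul_le_of_le_one_left hcoef hδ.2.le
  · have : 0 ≤ (1 - α1 n) * (1 + δ) := by nlinarith [hδ.1]
    nlinarith

theorem stmt_6 {B : Type*} [NormedAddCommGroup B] [NormedSpace ℝ B] [CompleteSpace B]
    (S : Set B) (hS : S.Nonempty) (hScl : IsClosed S) (hSco : Convex ℝ S)
    (T : B → B) (hTS : ∀ x ∈ S, T x ∈ S)
    (δ : ℝ) (hδ : δ ∈ Set.Ioo (0 : ℝ) 1)
    (hT : ∀ x ∈ S, ∀ y ∈ S, ‖T x - T y‖ ≤ δ * ‖x - y‖)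
    (xs : B) (hxs : xs ∈ S) (hfix : T xs = xs)
    (α1 α2 α3 : ℕ → ℝ)
    (hα1 : ∀ n, α1 n ∈ Set.Icc (0 : ℝ) 1) (hα2 : ∀ n, α2 n ∈ Set.Icc (0 : ℝ) 1)
    (hα3 : ∀ n, α3 n ∈ Set.Icc (0 : ℝ) 1)
    (hdiv : Tendsto (fun n => ∑ k ∈ Finset.range n, α1 k) atTop atTop)
    (p q r : ℕ → B) (hp0 : p 0 ∈ S)
    (hp : ∀ n, p (n + 1) = (1 - α1 n) • T (p n) + α1 n • T (q n))
    (hq : ∀ n, q n = (1 - α2 n) • T (p n) + α2 n • T (r n))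
    (hr : ∀ n, r n = (1 - α3 n) • p n + α3 n • T (p n))
    (u v y : ℕ → B) (hu0 : u 0 ∈ S)
    (hu : ∀ n, u (n + 1) = (1 - α1 n) • v n + α1 n • T (v n))
    (hv : ∀ n, v n = (1 - α2 n) • T (u n) + α2 n • T (y n))
    (hy : ∀ n, y n = (1 - α3 n) • u n + α3 n • T (u n)) :
    ∀ n, ‖p (n + 1) - u (n + 1)‖ ≤
      (1 - α1 n * (1 - δ)) * ‖p n - u n‖ +
        (1 - α1 n) * (2 + α2 n * δ * α3 n) * (1 + δ) * ‖p n - xs‖ :=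
  stmt_6_general S hSco T hTS δ hδ hT xs hxs hfix α1 α2 α3 hα1 hα2 hα3 p q r hp0 hp hq hr u v y hu0
    hu hv hy
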